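/- arXiv:2008.08985 — 2 statements merged into one kernel-verified Lean document; each statement's English description precedes it below -/
import Mathlib

section
/- A single-parametric rule with representation f satisfies strict endowment monotonicity if and only if f is strictly increasing. -/
open Finset
open scoped ENNReal

/-- A prize allocation rule: assigns to each (set of competitors, ranking, endowment)
a payoff for each competitor. The set of potential competitors is `ℕ`
(a countable set with at least three elements). -/
abbrev Rule : Type := Finset ℕ → (ℕ → ℕ) → ℝ → ℕ → ℝ

/-- `R` is a ranking of `N`: a bijection from `N` onto `{1, …, |N|}`. -/
def IsRanking (N : Finset ℕ) (R : ℕ → ℕ) : Prop :=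
  Set.BijOn R ↑N (Set.Icc 1 N.card)

/-- `(N, R, E)` is a competition: `N` is finite nonempty, `R` is a ranking of `N`,
and the prize endowment `E` is nonnegative. -/
def IsCompetition (N : Finset ℕ) (R : ℕ → ℕ) (E : ℝ) : Prop :=
  N.Nonempty ∧ IsRanking N R ∧ 0 ≤ E

/-- `φ` is a prize allocation rule: on every competition it yields nonnegative prizes
summing to the endowment. -/
def IsRule (φ : Rule) : Prop :=
  ∀ N R E, IsCompetition N R E →
    (∀ i ∈ N, 0 ≤ φ N R E i) ∧ ∑ i ∈ N, φ N R E i = E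

/-- The canonical subranking of `S` induced by `R`: the position of `i` within `S`. -/
def subRank (S : Finset ℕ) (R : ℕ → ℕ) : ℕ → ℕ :=
  fun i => (S.filter fun j => R j ≤ R i).card

/-- Order preservation: a higher-ranked competitor gets at least as much. -/
def OrderPreserving (φ : Rule) : Prop :=
  ∀ N R E, IsCompetition N R E → ∀ i ∈ N, ∀ j ∈ N, R i < R j →
    φ N R E j ≤ φ N R E i

/-- Strict order preservation. -/
def StrictOrderPreserving (φ : Rule) : Prop :=
  ∀ N R E, IsCompetition N R E → 0 < E → ∀ i ∈ N, ∀ j ∈ N, R i < R j →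
    φ N R E j < φ N R E i

/-- Winner-loser strict order preservation. -/
def WinnerLoserStrictOP (φ : Rule) : Prop :=
  OrderPreserving φ ∧
    ∀ N R E, IsCompetition N R E → 0 < E → ∀ i ∈ N, ∀ j ∈ N, i ≠ j →
      R i = 1 → R j = N.card → φ N R E j < φ N R E i

/-- Endowment monotonicity. -/
def EndowMono (φ : Rule) : Prop :=
  ∀ N R E E', IsCompetition N R E → IsCompetition N R E' → E < E' →
    ∀ i ∈ N, φ N R E i ≤ φ N R E' i

/-- Strict endowment monotonicity. -/
def StrictEndowMono (φ : Rule) : Prop :=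
  ∀ N R E E', IsCompetition N R E → IsCompetition N R E' → E < E' →
    ∀ i ∈ N, φ N R E i < φ N R E' i

/-- Winner strict endowment monotonicity. -/
def WinnerStrictEndowMono (φ : Rule) : Prop :=
  EndowMono φ ∧
    ∀ N R E E', IsCompetition N R E → IsCompetition N R E' → E < E' →
      ∀ i ∈ N, R i = 1 → φ N R E i < φ N R E' i

/-- Endowment continuity: each prize depends continuously on the endowment. -/
def EndowCont (φ : Rule) : Prop :=
  ∀ N R, N.Nonempty → IsRanking N R → ∀ i ∈ N,
    ContinuousOn (fun E => φ N R E i) (Set.Ici 0)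

/-- Consistency. -/
def Consistent (φ : Rule) : Prop :=
  ∀ N R E, IsCompetition N R E → ∀ S ⊆ N, S.Nonempty → ∀ i ∈ S,
    φ N R E i = φ S (subRank S R) (∑ j ∈ S, φ N R E j) i

/-- Local consistency: consistency for sets of competitors with contiguous positions. -/
def LocallyConsistent (φ : Rule) : Prop :=
  ∀ N R E, IsCompetition N R E → ∀ S ⊆ N, S.Nonempty →
    (∀ i ∈ S, ∀ j ∈ S, |(R i : ℤ) - (R j : ℤ)| ≤ (S.card : ℤ) - 1) →
    ∀ i ∈ S, φ N R E i = φ S (subRank S R) (∑ j ∈ S, φ N R E j) i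

/-- Top consistency: consistency for sets of top-ranked competitors. -/
def TopConsistent (φ : Rule) : Prop :=
  ∀ N R E, IsCompetition N R E → ∀ S ⊆ N, S.Nonempty →
    (∀ i ∈ S, R i ≤ S.card) →
    ∀ i ∈ S, φ N R E i = φ S (subRank S R) (∑ j ∈ S, φ N R E j) i

/-- Anonymity: prizes depend only on the position. -/
def Anonymous (φ : Rule) : Prop :=
  ∀ N R N' R' E, IsCompetition N R E → IsCompetition N' R' E →
    N.card = N'.card → ∀ i ∈ N, ∀ j ∈ N', R i = R' j →
      φ N R E i = φ N' R' E j

/-- Endowment additivity. -/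
def EndowAdditive (φ : Rule) : Prop :=
  ∀ N R, N.Nonempty → IsRanking N R → ∀ E E' : ℝ, 0 ≤ E → 0 ≤ E' →
    ∀ i ∈ N, φ N R (E + E') i = φ N R E i + φ N R E' i

/-- Scale invariance. -/
def ScaleInvariant (φ : Rule) : Prop :=
  ∀ N R E, IsCompetition N R E → ∀ i ∈ N, φ N R E i = E * φ N R 1 i

/-- `φ` is a single-parametric rule with representation `f`: `f : [0, ∞) → [0, ∞)` is
continuous, non-decreasing, with `f x ≤ x`, and for every competition there is `x ≥ 0`
with `∑_{k=1}^{|N|} f^{(k−1)}(x) = E` and the competitor at position `r` gets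
`f^{(r−1)}(x)`. -/
def SingleParamRepr (φ : Rule) (f : ℝ → ℝ) : Prop :=
  ContinuousOn f (Set.Ici 0) ∧ MonotoneOn f (Set.Ici 0) ∧
    (∀ x : ℝ, 0 ≤ x → 0 ≤ f x ∧ f x ≤ x) ∧
    ∀ N R E, IsCompetition N R E → ∃ x : ℝ, 0 ≤ x ∧
      (∑ k ∈ Finset.range N.card, f^[k] x) = E ∧
      ∀ i ∈ N, φ N R E i = f^[R i - 1] x


lemma iter_nonneg (f : ℝ → ℝ) (hf : ∀ x : ℝ, 0 ≤ x → 0 ≤ f x ∧ f x ≤ x) :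
    ∀ (k : ℕ) (x : ℝ), 0 ≤ x → 0 ≤ f^[k] x := by
  intro k
  induction k with
  | zero => intro x hx; simpa using hx
  | succ n ih =>
    intro x hx
    rw [Function.iterate_succ_apply']
    exact (hf _ (ih x hx)).1

lemma iter_strictMono (f : ℝ → ℝ) (hf : ∀ x : ℝ, 0 ≤ x → 0 ≤ f x ∧ f x ≤ x)
    (hsm : StrictMonoOn f (Set.Ici 0)) (k : ℕ) :
    StrictMonoOn (f^[k]) (Set.Ici 0) := by
  induction k with
  | zero => intro a _ b _ hab; simpa using hab
  | succ n ih =>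
    intro a ha b hb hab
    rw [Function.iterate_succ_apply', Function.iterate_succ_apply']
    exact hsm (Set.mem_Ici.mpr (iter_nonneg f hf n a (Set.mem_Ici.mp ha)))
      (Set.mem_Ici.mpr (iter_nonneg f hf n b (Set.mem_Ici.mp hb))) (ih ha hb hab)

lemma ranking01 : IsRanking ({0,1} : Finset ℕ) (fun n => n + 1) := by
  unfold IsRanking
  have hc : ({0,1} : Finset ℕ).card = 2 := by decide
  rw [hc]
  refine ⟨?_, ?_, ?_⟩
  · intro x hx
    simp only [Finset.coe_insert, Finset.coe_singleton, Set.mem_insert_iff,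
      Set.mem_singleton_iff] at hx
    rcases hx with rfl | rfl <;> simp [Set.mem_Icc]
  · exact Set.injOn_of_injective (fun a b h => by omega)
  · intro y hy
    simp only [Set.mem_Icc] at hy
    obtain ⟨hy1, hy2⟩ := hy
    interval_cases y
    · exact ⟨0, by simp, rfl⟩
    · exact ⟨1, by simp, rfl⟩

/-- A single-parametric rule with representation `f` satisfies strict endowment
monotonicity if and only if `f` is strictly increasing. -/
theorem singleParametric_sem_iff (φ : Rule) (f : ℝ → ℝ) (hrule : IsRule φ)
    (hrep : SingleParamRepr φ f) :
    StrictEndowMono φ ↔ StrictMonoOn f (Set.Ici 0) := by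
  obtain ⟨hcont, hmono, hnn, hex⟩ := hrep
  constructor
  · intro hsem
    have key : ∀ c : ℝ, 0 ≤ c → φ {0,1} (fun n => n+1) (c + f c) 1 = f c := by
      intro c hc
      have hcomp : IsCompetition {0,1} (fun n => n+1) (c + f c) :=
        ⟨by decide, ranking01, by have := (hnn c hc).1; linarith⟩
      obtain ⟨x, hx0, hsum, hval⟩ := hex _ _ _ hcomp
      have hcard : ({0,1} : Finset ℕ).card = 2 := by decide
      rw [hcard] at hsum
      have hsum' : x + f x = c + f c := by
        simpa [Finset.sum_range_succ] using hsum
      have hxc : x = c := by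
        rcases lt_trichotomy x c with h | h | h
        · have := hmono (Set.mem_Ici.mpr hx0) (Set.mem_Ici.mpr hc) h.le
          linarith
        · exact h
        · have := hmono (Set.mem_Ici.mpr hc) (Set.mem_Ici.mpr hx0) h.le
          linarith
      have h1 : (1:ℕ) ∈ ({0,1} : Finset ℕ) := by decide
      have := hval 1 h1
      simpa [hxc] using this
    intro a ha b hb hab
    have ha' : (0:ℝ) ≤ a := Set.mem_Ici.mp ha
    have hb' : (0:ℝ) ≤ b := Set.mem_Ici.mp hb
    have hfab : f a ≤ f b := hmono ha hb hab.le
    have hE : a + f a < b + f b := by linarith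
    have hca : IsCompetition {0,1} (fun n => n+1) (a + f a) :=
      ⟨by decide, ranking01, by have := (hnn a ha').1; linarith⟩
    have hcb : IsCompetition {0,1} (fun n => n+1) (b + f b) :=
      ⟨by decide, ranking01, by have := (hnn b hb').1; linarith⟩
    have := hsem _ _ _ _ hca hcb hE 1 (by decide)
    rwa [key a ha', key b hb'] at this
  · intro hsm N R E E' hc hc' hEE' i hi
    obtain ⟨x, hx0, hsum, hval⟩ := hex N R E hc
    obtain ⟨x', hx0', hsum', hval'⟩ := hex N R E' hc'
    have hxx : x < x' := by
      by_contra h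
      push_neg at h
      have hle : E' ≤ E := by
        rw [← hsum, ← hsum']
        apply Finset.sum_le_sum
        intro k _
        exact (iter_strictMono f hnn hsm k).monotoneOn (Set.mem_Ici.mpr hx0')
          (Set.mem_Ici.mpr hx0) h
      linarith
    rw [hval i hi, hval' i hi]
    exact iter_strictMono f hnn hsm (R i - 1) (Set.mem_Ici.mpr hx0)
      (Set.mem_Ici.mpr hx0') hxx
end

section
/- A prize allocation rule satisfies anonymity, order preservation, scale invariance, and local consistency if and only if it is a geometric rule. -/
open Finset
open scoped ENNReal

/-- Geometric rules: there is `λ ∈ [0, 1]` such that the prize at position `r`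
is `λ^(r−1) · E / ∑_{k=1}^{|N|} λ^(k−1)` (with the convention `λ^0 = 1`). -/
def IsGeometric (φ : Rule) : Prop :=
  ∃ lam : ℝ, 0 ≤ lam ∧ lam ≤ 1 ∧
    ∀ N R E, IsCompetition N R E → ∀ i ∈ N,
      φ N R E i = lam ^ (R i - 1) * E / ∑ k ∈ Finset.range N.card, lam ^ k

section Aux

/-- positivity of geometric partial sums -/
lemma geomSumPos {l : ℝ} (hl : 0 ≤ l) {n : ℕ} (hn : 1 ≤ n) :
    0 < ∑ k ∈ Finset.range n, l ^ k := by
  have h0 : (0:ℕ) ∈ Finset.range n := Finset.mem_range.mpr (by omega)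
  have := Finset.single_le_sum (f := fun k => l ^ k)
    (fun k _ => pow_nonneg hl k) h0
  simp only [pow_zero] at this
  linarith

lemma subRank_lt_subRank {S : Finset ℕ} {R : ℕ → ℕ} {i j : ℕ}
    (hj : j ∈ S) (h : R i < R j) : subRank S R i < subRank S R j := by
  apply Finset.card_lt_card
  constructor
  · intro x hx
    simp only [Finset.mem_filter] at hx ⊢
    exact ⟨hx.1, hx.2.trans h.le⟩
  · intro hsub
    have hjj : j ∈ S.filter (fun j' => R j' ≤ R j) := by
      simp only [Finset.mem_filter]; exact ⟨hj, le_refl _⟩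
    have := hsub hjj
    simp only [Finset.mem_filter] at this
    omega

lemma subRank_isRanking {S : Finset ℕ} {R : ℕ → ℕ}
    (hinj : Set.InjOn R ↑S) : IsRanking S (subRank S R) := by
  have hmaps : ∀ i ∈ S, subRank S R i ∈ Set.Icc 1 S.card := by
    intro i hi
    constructor
    · have : i ∈ S.filter (fun j => R j ≤ R i) := by
        simp only [Finset.mem_filter]; exact ⟨hi, le_refl _⟩
      exact Finset.card_pos.mpr ⟨i, this⟩
    · exact Finset.card_le_card (Finset.filter_subset _ _)
  have hinj' : Set.InjOn (subRank S R) ↑S := by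
    intro i hi j hj hij
    rcases lt_trichotomy (R i) (R j) with h | h | h
    · exact absurd hij (Nat.ne_of_lt (subRank_lt_subRank hj h))
    · exact hinj hi hj h
    · exact absurd hij.symm (Nat.ne_of_lt (subRank_lt_subRank hi h))
  refine ⟨hmaps, hinj', ?_⟩
  -- surjectivity via cardinality
  intro m hm
  have himg : S.image (subRank S R) = Finset.Icc 1 S.card := by
    apply Finset.eq_of_subset_of_card_le
    · intro x hx
      rcases Finset.mem_image.mp hx with ⟨i, hi, rfl⟩
      have := hmaps i hi
      simp only [Set.mem_Icc] at this
      exact Finset.mem_Icc.mpr this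
    · rw [Finset.card_image_of_injOn hinj', Nat.card_Icc]
      omega
  have : m ∈ S.image (subRank S R) := by
    rw [himg, Finset.mem_Icc]
    exact ⟨hm.1, hm.2⟩
  rcases Finset.mem_image.mp this with ⟨i, hi, hi'⟩
  exact ⟨i, hi, hi'⟩

lemma canonical_isRanking (n : ℕ) : IsRanking (Finset.range n) (· + 1) := by
  refine ⟨?_, ?_, ?_⟩
  · intro i hi
    simp only [Finset.coe_range, Set.mem_Iio] at hi
    simp only [Finset.card_range, Set.mem_Icc]
    omega
  · exact fun i _ j _ h => Nat.succ_injective h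
  · intro m hm
    simp only [Finset.card_range, Set.mem_Icc] at hm
    refine ⟨m - 1, by simp only [Finset.coe_range, Set.mem_Iio]; omega, ?_⟩
    show m - 1 + 1 = m
    omega

lemma canonical_isCompetition {n : ℕ} (hn : 1 ≤ n) {E : ℝ} (hE : 0 ≤ E) :
    IsCompetition (Finset.range n) (· + 1) E :=
  ⟨Finset.nonempty_range_iff.mpr (by omega), canonical_isRanking n, hE⟩

/-- the canonical payoff: prize of element `k` (position `k+1`) in the canonical
`n`-competition with endowment `1`. -/
noncomputable def gg (φ : Rule) (n k : ℕ) : ℝ := φ (Finset.range n) (· + 1) 1 k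

lemma key_lemma {φ : Rule} (han : Anonymous φ) (hsc : ScaleInvariant φ)
    {N : Finset ℕ} {R : ℕ → ℕ} {E : ℝ} (hc : IsCompetition N R E)
    {i : ℕ} (hi : i ∈ N) : φ N R E i = E * gg φ N.card (R i - 1) := by
  have hRi : R i ∈ Set.Icc 1 N.card := hc.2.1.1 hi
  simp only [Set.mem_Icc] at hRi
  have hcard : 1 ≤ N.card := hRi.2.trans' hRi.1
  have hc1 : IsCompetition N R 1 := ⟨hc.1, hc.2.1, zero_le_one⟩
  have hc2 : IsCompetition (Finset.range N.card) (· + 1) 1 :=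
    canonical_isCompetition hcard zero_le_one
  rw [hsc N R E hc i hi]
  congr 1
  exact han N R (Finset.range N.card) (· + 1) 1 hc1 hc2
    (by simp) i hi (R i - 1) (by simp only [Finset.mem_range]; omega)
    (by show R i = R i - 1 + 1; omega)

end Aux

/-- A prize allocation rule satisfies anonymity, order preservation, scale invariance,
and local consistency if and only if it is a geometric rule. -/
theorem geometric_characterization (φ : Rule) (hrule : IsRule φ) :
    (Anonymous φ ∧ OrderPreserving φ ∧ ScaleInvariant φ ∧ LocallyConsistent φ) ↔
      IsGeometric φ := by
  constructor
  · rintro ⟨han, hop, hsc, hlc⟩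
    -- canonical 2-competition facts
    have hc2 : IsCompetition (Finset.range 2) (· + 1) 1 :=
      canonical_isCompetition (by norm_num) zero_le_one
    have hab : gg φ 2 0 + gg φ 2 1 = 1 := by
      have := (hrule _ _ _ hc2).2
      rw [Finset.sum_range_succ, Finset.sum_range_one] at this
      exact this
    have hb0 : (0:ℝ) ≤ gg φ 2 1 := (hrule _ _ _ hc2).1 1 (by simp)
    have hba : gg φ 2 1 ≤ gg φ 2 0 :=
      hop _ _ _ hc2 0 (by simp) 1 (by simp) (by norm_num)
    have ha : (0:ℝ) < gg φ 2 0 := by linarith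
    set lam : ℝ := gg φ 2 1 / gg φ 2 0 with hlam
    have hl0 : 0 ≤ lam := div_nonneg hb0 ha.le
    have hl1 : lam ≤ 1 := (div_le_one ha).mpr hba
    -- the key recursion
    have step : ∀ n k : ℕ, k + 1 < n → gg φ n (k + 1) = lam * gg φ n k := by
      intro n k hk
      have hn1 : 1 ≤ n := by omega
      have hcn : IsCompetition (Finset.range n) (· + 1) 1 :=
        canonical_isCompetition hn1 zero_le_one
      set S : Finset ℕ := {k, k + 1} with hS
      have hkS : k ∈ S := by simp [hS]
      have hk1S : k + 1 ∈ S := by simp [hS]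
      have hScard : S.card = 2 := by
        rw [hS, Finset.card_insert_of_notMem (by simp), Finset.card_singleton]
      have hSsub : S ⊆ Finset.range n := by
        intro x hx
        simp only [hS, Finset.mem_insert, Finset.mem_singleton] at hx
        simp only [Finset.mem_range]
        omega
      have hcont : ∀ p ∈ S, ∀ q ∈ S,
          |((p + 1 : ℕ) : ℤ) - ((q + 1 : ℕ) : ℤ)| ≤ (S.card : ℤ) - 1 := by
        intro p hp q hq
        simp only [hS, Finset.mem_insert, Finset.mem_singleton] at hp hq
        rw [hScard, abs_le]
        push_cast
        omega
      have hsum : ∑ j ∈ S, φ (Finset.range n) (· + 1) 1 j = gg φ n k + gg φ n (k + 1) := by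
        rw [hS, Finset.sum_pair (by omega : k ≠ k + 1)]
        rfl
      have hnn := (hrule _ _ _ hcn).1
      have hgk0 : 0 ≤ gg φ n k := hnn k (hSsub hkS)
      have hgk10 : 0 ≤ gg φ n (k + 1) := hnn (k + 1) (hSsub hk1S)
      set E' : ℝ := gg φ n k + gg φ n (k + 1) with hE'
      have hcS : IsCompetition S (subRank S (· + 1)) E' :=
        ⟨⟨k, hkS⟩, subRank_isRanking (fun i _ j _ h => Nat.succ_injective h),
          by positivity⟩
      have hsr1 : subRank S (· + 1) k = 1 := by
        show (S.filter fun j => j + 1 ≤ k + 1).card = 1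
        rw [show S.filter (fun j => j + 1 ≤ k + 1) = {k} from by
          ext x
          simp only [hS, Finset.mem_filter, Finset.mem_insert, Finset.mem_singleton]
          omega]
        simp
      have hsr2 : subRank S (· + 1) (k + 1) = 2 := by
        show (S.filter fun j => j + 1 ≤ k + 1 + 1).card = 2
        rw [show S.filter (fun j => j + 1 ≤ k + 1 + 1) = S from by
          ext x
          simp only [hS, Finset.mem_filter, Finset.mem_insert, Finset.mem_singleton]
          omega]
        exact hScard
      have hck := hlc _ _ _ hcn S hSsub ⟨k, hkS⟩ hcont k hkS
      have hck1 := hlc _ _ _ hcn S hSsub ⟨k, hkS⟩ hcont (k + 1) hk1S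
      rw [hsum] at hck hck1
      have hkey := key_lemma han hsc hcS hkS
      have hkey1 := key_lemma han hsc hcS hk1S
      rw [hsr1, hScard] at hkey
      rw [hsr2, hScard] at hkey1
      have e1 : gg φ n k = E' * gg φ 2 0 := by
        show φ (Finset.range n) (· + 1) 1 k = E' * gg φ 2 0
        rw [hck, hkey]
      have e2 : gg φ n (k + 1) = E' * gg φ 2 1 := by
        show φ (Finset.range n) (· + 1) 1 (k + 1) = E' * gg φ 2 1
        rw [hck1, hkey1]
      rw [hlam, e1, e2]
      field_simp
    -- powers
    have pow_lem : ∀ n k : ℕ, k < n → gg φ n k = lam ^ k * gg φ n 0 := by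
      intro n k
      induction k with
      | zero => intro _; simp
      | succ k ih =>
        intro hk
        rw [step n k hk, ih (by omega), pow_succ]
        ring
    have sum_lem : ∀ n : ℕ, 1 ≤ n →
        gg φ n 0 * ∑ j ∈ Finset.range n, lam ^ j = 1 := by
      intro n hn
      have hcn : IsCompetition (Finset.range n) (· + 1) 1 :=
        canonical_isCompetition hn zero_le_one
      have hsum := (hrule _ _ _ hcn).2
      have h1 : ∑ k ∈ Finset.range n, φ (Finset.range n) (· + 1) 1 k
          = ∑ k ∈ Finset.range n, lam ^ k * gg φ n 0 :=
        Finset.sum_congr rfl (fun k hk => pow_lem n k (Finset.mem_range.mp hk))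
      rw [h1] at hsum
      rw [Finset.mul_sum, ← hsum]
      exact Finset.sum_congr rfl (fun k _ => by ring)
    refine ⟨lam, hl0, hl1, ?_⟩
    intro N R E hc i hi
    have hRi : R i ∈ Set.Icc 1 N.card := hc.2.1.1 hi
    simp only [Set.mem_Icc] at hRi
    have hn1 : 1 ≤ N.card := le_trans hRi.1 hRi.2
    have hpos : 0 < ∑ j ∈ Finset.range N.card, lam ^ j := geomSumPos hl0 hn1
    have hg0 : gg φ N.card 0 = 1 / ∑ j ∈ Finset.range N.card, lam ^ j := by
      rw [eq_div_iff hpos.ne']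
      exact sum_lem N.card hn1
    rw [key_lemma han hsc hc hi, pow_lem N.card (R i - 1) (by omega), hg0]
    ring
  · rintro ⟨lam, hl0, hl1, hf⟩
    have hpos : ∀ n : ℕ, 1 ≤ n → 0 < ∑ k ∈ Finset.range n, lam ^ k :=
      fun n hn => geomSumPos hl0 hn
    refine ⟨?_, ?_, ?_, ?_⟩
    · intro N R N' R' E hc hc' hcard i hi j hj hij
      rw [hf N R E hc i hi, hf N' R' E hc' j hj, hij, hcard]
    · intro N R E hc i hi j hj hij
      rw [hf N R E hc i hi, hf N R E hc j hj]
      have hn1 : 1 ≤ N.card := Finset.card_pos.mpr ⟨i, hi⟩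
      have hp := hpos N.card hn1
      have hE : 0 ≤ E := hc.2.2
      have hpow : lam ^ (R j - 1) ≤ lam ^ (R i - 1) :=
        pow_le_pow_of_le_one hl0 hl1 (by omega)
      have := mul_le_mul_of_nonneg_right hpow hE
      exact div_le_div_of_nonneg_right this hp.le
    · intro N R E hc i hi
      have hc1 : IsCompetition N R 1 := ⟨hc.1, hc.2.1, zero_le_one⟩
      rw [hf N R E hc i hi, hf N R 1 hc1 i hi]
      ring
    · intro N R E hc S hS hSne hcont i hi
      have hinjS : Set.InjOn R ↑S := hc.2.1.2.1.mono (Finset.coe_subset.mpr hS)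
      have hn1 : 1 ≤ N.card := Finset.card_pos.mpr hc.1
      have hs1 : 1 ≤ S.card := Finset.card_pos.mpr hSne
      obtain ⟨i0, hi0, hmin⟩ := S.exists_min_image R hSne
      have hm1 : 1 ≤ R i0 := (hc.2.1.1 (hS hi0)).1
      have hRle : ∀ j ∈ S, R j ≤ R i0 + S.card - 1 := by
        intro j hj
        have h := hcont j hj i0 hi0
        rw [abs_le] at h
        have := hmin j hj
        omega
      have himg : S.image R = Finset.Icc (R i0) (R i0 + S.card - 1) := by
        apply Finset.eq_of_subset_of_card_le
        · intro r hr
          rcases Finset.mem_image.mp hr with ⟨j, hj, rfl⟩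
          exact Finset.mem_Icc.mpr ⟨hmin j hj, hRle j hj⟩
        · rw [Finset.card_image_of_injOn hinjS, Nat.card_Icc]
          omega
      have hsr : ∀ j ∈ S, subRank S R j = R j + 1 - R i0 := by
        intro j hj
        show (S.filter fun x => R x ≤ R j).card = R j + 1 - R i0
        rw [← Finset.card_image_of_injOn
          (hinjS.mono (Finset.coe_subset.mpr (Finset.filter_subset _ _)))]
        rw [show (S.filter fun x => R x ≤ R j).image R = Finset.Icc (R i0) (R j) from by
          have h1 := hRle j hj
          ext x
          simp only [Finset.mem_image, Finset.mem_filter, Finset.mem_Icc]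
          constructor
          · rintro ⟨y, ⟨hyS, hyle⟩, rfl⟩
            exact ⟨hmin y hyS, hyle⟩
          · rintro ⟨hx1, hx2⟩
            have hx : x ∈ S.image R := by
              rw [himg]
              exact Finset.mem_Icc.mpr ⟨hx1, by omega⟩
            rcases Finset.mem_image.mp hx with ⟨y, hyS, rfl⟩
            exact ⟨y, ⟨hyS, hx2⟩, rfl⟩]
        rw [Nat.card_Icc]
      have hsumS : ∑ j ∈ S, φ N R E j
          = lam ^ (R i0 - 1) * (∑ k ∈ Finset.range S.card, lam ^ k) * E
            / ∑ k ∈ Finset.range N.card, lam ^ k := by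
        rw [Finset.sum_congr rfl (fun j hj => hf N R E hc j (hS hj))]
        rw [← Finset.sum_div]
        congr 1
        rw [← Finset.sum_mul]
        congr 1
        rw [show ∑ j ∈ S, lam ^ (R j - 1) = ∑ r ∈ S.image R, lam ^ (r - 1) from
          (Finset.sum_image (g := R) (f := fun r => lam ^ (r - 1))
            (fun a ha b hb h => hinjS ha hb h)).symm, himg]
        rw [show Finset.Icc (R i0) (R i0 + S.card - 1) = Finset.Ico (R i0) (R i0 + S.card) from by
          ext x; simp only [Finset.mem_Icc, Finset.mem_Ico]; omega]
        rw [Finset.sum_Ico_eq_sum_range]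
        rw [show R i0 + S.card - R i0 = S.card from by omega]
        rw [Finset.mul_sum]
        refine Finset.sum_congr rfl (fun k _ => ?_)
        rw [← pow_add]
        congr 1
        omega
      have hSsp : 0 < ∑ k ∈ Finset.range S.card, lam ^ k := hpos _ hs1
      have hSnp : 0 < ∑ k ∈ Finset.range N.card, lam ^ k := hpos _ hn1
      have hE : 0 ≤ E := hc.2.2
      have hcS : IsCompetition S (subRank S R) (∑ j ∈ S, φ N R E j) := by
        refine ⟨hSne, subRank_isRanking hinjS, ?_⟩
        rw [hsumS]
        positivity
      rw [hf S (subRank S R) _ hcS i hi, hf N R E hc i (hS hi), hsr i hi, hsumS]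
      have hmi : R i0 ≤ R i := hmin i hi
      rw [show R i - 1 = (R i + 1 - R i0 - 1) + (R i0 - 1) from by omega, pow_add]
      field_simp
end
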